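/- Let G be a finite group acting on a finite connected graph X̃ with quotient graph of groups 𝕏 = X̃//G on X = X̃/G, and let p_* : ℤ^{V(X̃)} → ℤ^{V(X)} send each vertex to its orbit. Then p_* ∘ L_{X̃} = L_𝕏 ∘ p_*, where L_{X̃} is the ordinary Laplacian of X̃ and L_𝕏 is the weighted Laplacian of 𝕏 with weights given by orders of stabilizers. Consequently p_* descends to a surjective group homomorphism p_* : Jac(X̃) → Jac(𝕏). -/
import Mathlib


open Finset

/-- Connectivity of a graph presented by half-edges: root map `r` and involution `ι`. -/
def HalfConn {V H : Type*} (r : H → V) (ι : H → H) : Prop :=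
  ∀ u v : V, Relation.ReflTransGen (fun a b => ∃ h, r h = a ∧ r (ι h) = b) u v

/-- A graph (in terms of half-edges) together with an action of a group `G`. -/
structure GraphAct (G V H : Type*) [Group G] [MulAction G V] [MulAction G H] where
  r : H → V
  ι : H → H
  ι_invol : ∀ h, ι (ι h) = h
  smul_r : ∀ (g : G) (h : H), r (g • h) = g • r h
  smul_ι : ∀ (g : G) (h : H), ι (g • h) = g • ι h

variable {G V H : Type*} [Group G] [MulAction G V] [MulAction G H]

/-- Vertices of the quotient graph: orbits of vertices. -/
abbrev GraphAct.qVert (_ : GraphAct G V H) := Quotient (MulAction.orbitRel G V)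

/-- Half-edges of the quotient graph: orbits of half-edges. -/
abbrev GraphAct.qHalf (_ : GraphAct G V H) := Quotient (MulAction.orbitRel G H)

/-- The root map of the quotient graph. -/
def GraphAct.qr (X : GraphAct G V H) : X.qHalf → X.qVert :=
  Quotient.map X.r (by
    intro a b hab
    obtain ⟨g, rfl⟩ := hab
    exact ⟨g, (X.smul_r g b).symm⟩)

/-- The involution of the quotient graph. -/
def GraphAct.qι (X : GraphAct G V H) : X.qHalf → X.qHalf :=
  Quotient.map X.ι (by
    intro a b hab
    obtain ⟨g, rfl⟩ := hab
    exact ⟨g, (X.smul_ι g b).symm⟩)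

/-- The vertex weight of the quotient graph of groups: the order of the stabilizer of a
preimage vertex. -/
noncomputable def GraphAct.cVq (X : GraphAct G V H) (v : X.qVert) : ℕ :=
  Nat.card (MulAction.stabilizer G v.out)

/-- The half-edge weight of the quotient graph of groups: the order of the stabilizer of a
preimage half-edge. -/
noncomputable def GraphAct.cHq (X : GraphAct G V H) (h : X.qHalf) : ℕ :=
  Nat.card (MulAction.stabilizer G h.out)

/-- The (half-edge) Laplacian matrix of a graph. -/
def halfLapMat {V H : Type*} [Fintype H] [DecidableEq V]
    (r : H → V) (ι : H → H) : Matrix V V ℤ :=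
  Matrix.of fun u v => ∑ h : H,
    if r h = v then (if r h = u then 1 else 0) - (if r (ι h) = u then 1 else 0) else 0

/-- The weighted Laplacian matrix of a graph of groups with vertex weights `cV` and
half-edge weights `cH`: firing `v` moves `c(v)/c(h)` chips along each half-edge `h` at
`v` to `r(ι h)`. -/
def halfLapWMat {V H : Type*} [Fintype H] [DecidableEq V]
    (r : H → V) (ι : H → H) (cV : V → ℕ) (cH : H → ℕ) : Matrix V V ℤ :=
  Matrix.of fun u v => ∑ h : H,
    if r h = v then ((cV v / cH h : ℕ) : ℤ) *
      ((if r h = u then 1 else 0) - (if r (ι h) = u then 1 else 0)) else 0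

/-- Degree (sum of coefficients) of a divisor, as a linear map. -/
def degHom (V : Type*) [Fintype V] : (V → ℤ) →ₗ[ℤ] ℤ where
  toFun d := ∑ v, d v
  map_add' x y := Finset.sum_add_distrib
  map_smul' c x := by simp [Finset.mul_sum]

/-- Jacobian: degree-zero divisors modulo the image of (the linear map given by) `M`. -/
abbrev jacOfMat {V : Type*} [Fintype V] (M : Matrix V V ℤ) :=
  LinearMap.ker (degHom V) ⧸
    Submodule.comap (LinearMap.ker (degHom V)).subtype (LinearMap.range M.mulVecLin)

/-- Pushforward of divisors along a map of vertex sets: add up the chips in each fiber. -/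
def pushV {V W : Type*} [Fintype V] [DecidableEq W] (p : V → W) (d : V → ℤ) : W → ℤ :=
  fun w => ∑ v ∈ Finset.univ.filter (fun v => p v = w), d v


section AuxLemmas
variable {G : Type*} [Group G]


lemma stabCard_congr {α : Type*} [MulAction G α] {a b : α}
    (hab : Quotient.mk (MulAction.orbitRel G α) a = Quotient.mk (MulAction.orbitRel G α) b) :
    Nat.card (MulAction.stabilizer G a) = Nat.card (MulAction.stabilizer G b) :=
  Nat.card_congr (MulAction.stabilizerEquivStabilizerOfOrbitRel (Quotient.exact hab)).toEquiv

lemma count_lemma {VV HH : Type*} [MulAction G VV] [MulAction G HH]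
    (X : GraphAct G VV HH) (h0 : HH) (u : VV)
    (hu : Quotient.mk (MulAction.orbitRel G VV) u
        = Quotient.mk (MulAction.orbitRel G VV) (X.r h0)) :
    Nat.card {h : HH // Quotient.mk (MulAction.orbitRel G HH) h
        = Quotient.mk (MulAction.orbitRel G HH) h0 ∧ X.r h = u}
      * Nat.card (MulAction.stabilizer G h0)
      = Nat.card (MulAction.stabilizer G u) := by
  classical
  have hle : MulAction.stabilizer G h0 ≤ MulAction.stabilizer G (X.r h0) := by
    intro g hg
    have hg' : g • h0 = h0 := hg
    have : X.r (g • h0) = X.r h0 := by rw [hg']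
    rw [X.smul_r] at this
    exact this
  set Gv := MulAction.stabilizer G (X.r h0) with hGv
  set K := (MulAction.stabilizer G h0).subgroupOf Gv with hK
  obtain ⟨g0, hg0⟩ := MulAction.mem_orbit_iff.mp (Quotient.exact hu)
  -- hg0 : g0 • X.r h0 = u
  have hfb : ∀ s : Gv, (Quotient.mk (MulAction.orbitRel G HH) (g0 • (s : G) • h0)
        = Quotient.mk (MulAction.orbitRel G HH) h0 ∧ X.r (g0 • (s : G) • h0) = u) := by
    intro s
    constructor
    · exact Quotient.sound (MulAction.mem_orbit_iff.mpr ⟨g0 * s, (mul_smul _ _ _)⟩)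
    · rw [X.smul_r, X.smul_r, s.2, hg0]
  let fb : Gv → {h : HH // Quotient.mk (MulAction.orbitRel G HH) h
        = Quotient.mk (MulAction.orbitRel G HH) h0 ∧ X.r h = u} :=
    fun s => ⟨g0 • (s : G) • h0, hfb s⟩
  have hresp : ∀ s t : Gv, QuotientGroup.leftRel K s t → fb s = fb t := by
    intro s t hst
    have h1 : ((s⁻¹ * t : Gv) : G) ∈ MulAction.stabilizer G h0 :=
      Subgroup.mem_subgroupOf.mp (QuotientGroup.leftRel_apply.mp hst)
    have h2 : ((s : G)⁻¹ * (t : G)) • h0 = h0 := h1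
    apply Subtype.ext
    show g0 • (s : G) • h0 = g0 • (t : G) • h0
    have h3 : (t : G) • h0 = (s : G) • h0 := by
      have h4 := congrArg (fun z => (s : G) • z) h2
      simpa [smul_smul, mul_inv_cancel_left] using h4
    rw [h3]
  let F : Gv ⧸ K → {h : HH // Quotient.mk (MulAction.orbitRel G HH) h
        = Quotient.mk (MulAction.orbitRel G HH) h0 ∧ X.r h = u} :=
    Quotient.lift fb hresp
  have hFbij : Function.Bijective F := by
    constructor
    · intro a b
      induction a using Quotient.ind
      induction b using Quotient.ind
      rename_i s t
      intro hst
      apply Quotient.sound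
      refine QuotientGroup.leftRel_apply.mpr (Subgroup.mem_subgroupOf.mpr ?_)
      have : g0 • (s : G) • h0 = g0 • (t : G) • h0 := congrArg Subtype.val hst
      have h3 : (s : G) • h0 = (t : G) • h0 := smul_left_cancel g0 this
      show ((s⁻¹ * t : Gv) : G) • h0 = h0
      push_cast
      rw [mul_smul, ← h3, smul_smul, inv_mul_cancel, one_smul]
    · rintro ⟨h, hq, hr⟩
      obtain ⟨g, hg⟩ := MulAction.mem_orbit_iff.mp (Quotient.exact hq)
      -- hg : g • h0 = h
      have hgr : g • X.r h0 = u := by rw [← X.smul_r, hg, hr]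
      have hmem : g0⁻¹ * g ∈ Gv := by
        show (g0⁻¹ * g) • X.r h0 = X.r h0
        rw [mul_smul, hgr, ← hg0, inv_smul_smul]
      refine ⟨Quotient.mk _ (⟨g0⁻¹ * g, hmem⟩ : Gv), ?_⟩
      apply Subtype.ext
      show g0 • (g0⁻¹ * g) • h0 = h
      rw [smul_smul, mul_inv_cancel_left, hg]
  calc Nat.card {h : HH // Quotient.mk (MulAction.orbitRel G HH) h
        = Quotient.mk (MulAction.orbitRel G HH) h0 ∧ X.r h = u} * Nat.card (MulAction.stabilizer G h0)
      = Nat.card (Gv ⧸ K) * Nat.card K := by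
        rw [Nat.card_congr (Equiv.ofBijective F hFbij),
          Nat.card_congr (Subgroup.subgroupOfEquivOfLe hle).toEquiv]
    _ = Nat.card Gv := (Subgroup.card_eq_card_quotient_mul_card_subgroup K).symm
    _ = Nat.card (MulAction.stabilizer G u) := (stabCard_congr hu).symm

end AuxLemmas

section Intertwine

lemma intertwine {G VV HH : Type*} [Group G] [Finite G] [MulAction G VV] [MulAction G HH]
    [Fintype VV] [Fintype HH] [DecidableEq VV]
    (X : GraphAct G VV HH)
    [Fintype X.qVert] [Fintype X.qHalf] [DecidableEq X.qVert]
    (d : VV → ℤ) :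
    pushV (Quotient.mk (MulAction.orbitRel G VV)) ((halfLapMat X.r X.ι).mulVec d) =
      (halfLapWMat X.qr X.qι X.cVq X.cHq).mulVec
        (pushV (Quotient.mk (MulAction.orbitRel G VV)) d) := by
  classical
  set p : VV → X.qVert := Quotient.mk (MulAction.orbitRel G VV) with hp
  set q : HH → X.qHalf := Quotient.mk (MulAction.orbitRel G HH) with hq
  have hqr : ∀ h : HH, X.qr (q h) = p (X.r h) := fun h => rfl
  have hqι : ∀ h : HH, X.qι (q h) = q (X.ι h) := fun h => rfl
  funext w
  have hM : ∀ u : VV, (halfLapMat X.r X.ι).mulVec d u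
      = ∑ h : HH, ((if X.r h = u then (1:ℤ) else 0)
          - (if X.r (X.ι h) = u then 1 else 0)) * d (X.r h) := by
    intro u
    simp only [Matrix.mulVec, dotProduct, halfLapMat, Matrix.of_apply, Finset.sum_mul]
    rw [Finset.sum_comm]
    refine Finset.sum_congr rfl fun h _ => ?_
    simp only [ite_mul, zero_mul]
    rw [Finset.sum_ite_eq]
    simp
  have hL : pushV p ((halfLapMat X.r X.ι).mulVec d) w
      = ∑ h : HH, ((if p (X.r h) = w then (1:ℤ) else 0)
          - (if p (X.r (X.ι h)) = w then 1 else 0)) * d (X.r h) := by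
    unfold pushV
    rw [Finset.sum_congr rfl fun u _ => hM u, Finset.sum_comm]
    refine Finset.sum_congr rfl fun h _ => ?_
    rw [← Finset.sum_mul]
    congr 1
    rw [Finset.sum_sub_distrib]
    congr 1
    · rw [Finset.sum_ite_eq]
      simp [Finset.mem_filter]
    · rw [Finset.sum_ite_eq]
      simp [Finset.mem_filter]
  have hW : (halfLapWMat X.qr X.qι X.cVq X.cHq).mulVec (pushV p d) w
      = ∑ k : X.qHalf, ((X.cVq (X.qr k) / X.cHq k : ℕ) : ℤ)
          * ((if X.qr k = w then (1:ℤ) else 0) - (if X.qr (X.qι k) = w then 1 else 0))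
          * pushV p d (X.qr k) := by
    simp only [Matrix.mulVec, dotProduct, halfLapWMat, Matrix.of_apply, Finset.sum_mul]
    rw [Finset.sum_comm]
    refine Finset.sum_congr rfl fun k _ => ?_
    simp only [ite_mul, zero_mul]
    rw [Finset.sum_ite_eq]
    simp
  have hfiber : ∀ k : X.qHalf, ∑ h ∈ Finset.univ.filter (fun h => q h = k), d (X.r h)
      = ((X.cVq (X.qr k) / X.cHq k : ℕ) : ℤ) * pushV p d (X.qr k) := by
    intro k
    have step1 : ∑ h ∈ Finset.univ.filter (fun h => q h = k), d (X.r h)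
        = ∑ u : VV, ∑ h ∈ (Finset.univ.filter (fun h => q h = k)).filter
            (fun h => X.r h = u), d (X.r h) :=
      (Finset.sum_fiberwise _ X.r _).symm
    rw [step1]
    have step2 : ∀ u : VV, ∑ h ∈ (Finset.univ.filter (fun h => q h = k)).filter
          (fun h => X.r h = u), d (X.r h)
        = (((Finset.univ.filter (fun h => q h = k ∧ X.r h = u)).card : ℤ)) * d u := by
      intro u
      rw [Finset.filter_filter]
      rw [Finset.sum_congr rfl (fun h hh => by rw [(Finset.mem_filter.mp hh).2.2])]
      rw [Finset.sum_const, nsmul_eq_mul]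
    have ccard : ∀ u : VV, ((Finset.univ.filter (fun h => q h = k ∧ X.r h = u)).card : ℤ)
        = if p u = X.qr k then ((X.cVq (X.qr k) / X.cHq k : ℕ) : ℤ) else 0 := by
      intro u
      by_cases hpu : p u = X.qr k
      · rw [if_pos hpu]
        have hk : q (Quotient.out k) = k := Quotient.out_eq k
        have hu : p u = p (X.r (Quotient.out k)) := by rw [hpu, ← hqr, hk]
        have hclem := count_lemma X (Quotient.out k) u hu
        have hcc : (Finset.univ.filter (fun h => q h = k ∧ X.r h = u)).card
            = Nat.card {h : HH // q h = q (Quotient.out k) ∧ X.r h = u} := by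
          rw [Nat.card_eq_fintype_card, Fintype.card_subtype]
          congr 1
          apply Finset.filter_congr
          intro h _
          rw [hk]
        have h1 : X.cHq k = Nat.card (MulAction.stabilizer G (Quotient.out k)) := rfl
        have h2 : X.cVq (X.qr k) = Nat.card (MulAction.stabilizer G u) := by
          apply stabCard_congr
          rw [Quotient.out_eq]
          exact hpu.symm
        have hpos : 0 < X.cHq k := Nat.card_pos
        have key : (Finset.univ.filter (fun h => q h = k ∧ X.r h = u)).card * X.cHq k
            = X.cVq (X.qr k) := by
          rw [hcc, h1, h2]; exact hclem
        have hdiv : X.cVq (X.qr k) / X.cHq k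
            = (Finset.univ.filter (fun h => q h = k ∧ X.r h = u)).card :=
          Nat.div_eq_of_eq_mul_left hpos key.symm
        rw [hdiv]
      · rw [if_neg hpu]
        have hemp : (Finset.univ.filter (fun h => q h = k ∧ X.r h = u)) = ∅ := by
          rw [Finset.filter_eq_empty_iff]
          intro h _
          rintro ⟨hqh, hrh⟩
          apply hpu
          rw [← hrh, ← hqr h, hqh]
        rw [hemp]
        simp
    rw [Finset.sum_congr rfl fun u _ => step2 u]
    rw [Finset.sum_congr rfl fun u _ => by rw [ccard u]]
    simp only [ite_mul, zero_mul]
    rw [← Finset.sum_filter, ← Finset.mul_sum]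
    rfl
  rw [hL, hW]
  rw [← Finset.sum_fiberwise Finset.univ q (fun h =>
    ((if p (X.r h) = w then (1:ℤ) else 0)
      - (if p (X.r (X.ι h)) = w then 1 else 0)) * d (X.r h))]
  refine Finset.sum_congr rfl fun k _ => ?_
  have hin : ∀ h ∈ Finset.univ.filter (fun h => q h = k),
      ((if p (X.r h) = w then (1:ℤ) else 0)
          - (if p (X.r (X.ι h)) = w then 1 else 0)) * d (X.r h)
      = ((if X.qr k = w then (1:ℤ) else 0)
          - (if X.qr (X.qι k) = w then 1 else 0)) * d (X.r h) := by
    intro h hh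
    have hk := (Finset.mem_filter.mp hh).2
    rw [← hk, hqr, hqι, hqr]
  rw [Finset.sum_congr rfl hin, ← Finset.mul_sum, hfiber k]
  ring

end Intertwine

/-- for a finite group `G` acting on a finite connected graph `X̃` with
quotient graph of groups `𝕏 = X̃ // G`, the pushforward `p_*` (summing chips over orbits)
intertwines the ordinary Laplacian of `X̃` with the weighted Laplacian of `𝕏`
(`p_* ∘ L_{X̃} = L_𝕏 ∘ p_*`), and descends to a surjective homomorphism
`Jac(X̃) → Jac(𝕏)`. -/
theorem stmt6 {G VV HH : Type*} [Group G] [Finite G] [MulAction G VV] [MulAction G HH]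
    [Fintype VV] [Fintype HH] [DecidableEq VV]
    (X : GraphAct G VV HH)
    [Fintype X.qVert] [Fintype X.qHalf] [DecidableEq X.qVert]
    (hconn : HalfConn X.r X.ι) :
    (∀ d : VV → ℤ,
        pushV (Quotient.mk (MulAction.orbitRel G VV)) ((halfLapMat X.r X.ι).mulVec d) =
          (halfLapWMat X.qr X.qι X.cVq X.cHq).mulVec
            (pushV (Quotient.mk (MulAction.orbitRel G VV)) d)) ∧
    ∃ φ : jacOfMat (halfLapMat X.r X.ι) →+ jacOfMat (halfLapWMat X.qr X.qι X.cVq X.cHq),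
      Function.Surjective φ ∧
      ∀ (x : LinearMap.ker (degHom VV)) (y : LinearMap.ker (degHom X.qVert)),
        pushV (Quotient.mk (MulAction.orbitRel G VV)) (x : VV → ℤ) = (y : X.qVert → ℤ) →
          φ (Submodule.Quotient.mk x) = Submodule.Quotient.mk y := by
  classical
  refine ⟨intertwine X, ?_⟩
  set p : VV → X.qVert := Quotient.mk (MulAction.orbitRel G VV) with hp
  let P : (VV → ℤ) →ₗ[ℤ] (X.qVert → ℤ) :=
    { toFun := pushV p
      map_add' := fun x y => by
        funext w; simp [pushV, Finset.sum_add_distrib]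
      map_smul' := fun c x => by
        funext w; simp [pushV, Finset.mul_sum] }
  have hPdeg : ∀ x : VV → ℤ, degHom X.qVert (P x) = degHom VV x := by
    intro x
    show ∑ w, pushV p x w = ∑ v, x v
    exact Finset.sum_fiberwise Finset.univ p x
  have hres : ∀ x ∈ LinearMap.ker (degHom VV), P x ∈ LinearMap.ker (degHom X.qVert) := by
    intro x hx
    rw [LinearMap.mem_ker, hPdeg]
    exact hx
  let Pk : LinearMap.ker (degHom VV) →ₗ[ℤ] LinearMap.ker (degHom X.qVert) := P.restrict hres
  set N := Submodule.comap (LinearMap.ker (degHom VV)).subtype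
      (LinearMap.range (halfLapMat X.r X.ι).mulVecLin) with hN
  set N' := Submodule.comap (LinearMap.ker (degHom X.qVert)).subtype
      (LinearMap.range (halfLapWMat X.qr X.qι X.cVq X.cHq).mulVecLin) with hN'
  let φ0 : LinearMap.ker (degHom VV) →ₗ[ℤ] jacOfMat (halfLapWMat X.qr X.qι X.cVq X.cHq) :=
    N'.mkQ.comp Pk
  have hker : N ≤ LinearMap.ker φ0 := by
    intro x hx
    obtain ⟨e, he⟩ := hx
    rw [LinearMap.mem_ker]
    show N'.mkQ (Pk x) = 0
    rw [Submodule.mkQ_apply, Submodule.Quotient.mk_eq_zero]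
    show ((LinearMap.ker (degHom X.qVert)).subtype (Pk x))
        ∈ LinearMap.range (halfLapWMat X.qr X.qι X.cVq X.cHq).mulVecLin
    refine ⟨pushV p e, ?_⟩
    have hx' : ((LinearMap.ker (degHom VV)).subtype x) = (halfLapMat X.r X.ι).mulVec e := by
      rw [← he, Matrix.mulVecLin_apply]
    show (halfLapWMat X.qr X.qι X.cVq X.cHq).mulVec (pushV p e) = pushV p (x : VV → ℤ)
    have := intertwine X e
    rw [show ((x : VV → ℤ)) = (halfLapMat X.r X.ι).mulVec e from hx']
    exact this.symm
  let φL := Submodule.liftQ N φ0 hker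
  refine ⟨φL.toAddMonoidHom, ?_, ?_⟩
  · -- surjectivity
    intro z
    obtain ⟨y, rfl⟩ := Submodule.mkQ_surjective N' z
    set d0 : VV → ℤ := fun v => if Quotient.out (p v) = v then (y : X.qVert → ℤ) (p v) else 0
      with hd0def
    have hPd0 : pushV p d0 = (y : X.qVert → ℤ) := by
      funext w
      unfold pushV
      have hcong : ∀ v ∈ Finset.univ.filter (fun v => p v = w),
          d0 v = if Quotient.out w = v then (y : X.qVert → ℤ) w else 0 := by
        intro v hv
        have hpv : p v = w := (Finset.mem_filter.mp hv).2
        simp [hd0def, hpv]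
      rw [Finset.sum_congr rfl hcong, Finset.sum_ite_eq]
      have how : p (Quotient.out w) = w := Quotient.out_eq w
      simp [Finset.mem_filter, how]
    have hd0 : d0 ∈ LinearMap.ker (degHom VV) := by
      rw [LinearMap.mem_ker, ← hPdeg d0]
      show degHom X.qVert (pushV p d0) = 0
      rw [hPd0]
      exact y.2
    refine ⟨Submodule.Quotient.mk ⟨d0, hd0⟩, ?_⟩
    show φL (Submodule.Quotient.mk ⟨d0, hd0⟩) = N'.mkQ y
    rw [show φL (Submodule.Quotient.mk ⟨d0, hd0⟩) = φ0 ⟨d0, hd0⟩ from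
      Submodule.liftQ_apply N φ0 ⟨d0, hd0⟩]
    show N'.mkQ (Pk ⟨d0, hd0⟩) = N'.mkQ y
    congr 1
    exact Subtype.ext hPd0
  · -- compatibility
    intro x y hxy
    show φL (Submodule.Quotient.mk x) = Submodule.Quotient.mk y
    rw [show φL (Submodule.Quotient.mk x) = φ0 x from Submodule.liftQ_apply N φ0 x]
    show N'.mkQ (Pk x) = Submodule.Quotient.mk y
    rw [Submodule.mkQ_apply]
    congr 1
    exact Subtype.ext hxy
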